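/- With the same setup, the trace distance D(ρ^{00}_odd, ρ^{01}_odd) = 1/2^{n-2}, where |Ψ^{01}⟩ = ½(|i⟩+|i⊕k₁⟩−|i⊕k₂⟩−|i⊕k₁⊕k₂⟩). -/

import Mathlib

open Matrix Finset
open scoped ComplexOrder Kronecker

/-- Trace norm `tr √(Aᴴ A)` of a complex square matrix. -/
noncomputable def traceNorm {ι : Type*} [Fintype ι] [DecidableEq ι] (A : Matrix ι ι ℂ) : ℝ :=
  (((Matrix.posSemidef_conjTranspose_mul_self A).1.eigenvectorUnitary.1 *
      diagonal (((↑) : ℝ → ℂ) ∘ (√·) ∘ (Matrix.posSemidef_conjTranspose_mul_self A).1.eigenvalues) *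
      (star (Matrix.posSemidef_conjTranspose_mul_self A).1.eigenvectorUnitary : Matrix ι ι ℂ)).trace).re

/-- Bitwise XOR on bit strings. -/
def xo {n : ℕ} (i k : Fin n → Bool) : Fin n → Bool := fun j => xor (i j) (k j)

/-- Hamming weight of a bit string. -/
def wt {n : ℕ} (i : Fin n → Bool) : ℕ := (Finset.univ.filter fun j => i j = true).card

/-- Index type for `n = 2m` qubits, split into two halves of `m` qubits. -/
abbrev Idx (m : ℕ) := (Fin m → Bool) × (Fin m → Bool)

/-- Bitwise XOR on split bit strings. -/
def xo2 {m : ℕ} (i k : Idx m) : Idx m := (xo i.1 k.1, xo i.2 k.2)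

/-- Basis vector `|i⟩`. -/
def ket2 {m : ℕ} (i : Idx m) : Idx m → ℂ := fun j => if j = i then 1 else 0

/-- Sign `(-1)^a`. -/
def sgn (a : Bool) : ℂ := if a then -1 else 1

/-- The state `|Ψ^{ab}_{k₁,k₂,i}⟩ = ½(|i⟩+(-1)^a|i⊕k₁⟩+(-1)^b|i⊕k₂⟩+(-1)^{a+b}|i⊕k₁⊕k₂⟩)`. -/
noncomputable def Psi {m : ℕ} (k1 k2 i : Idx m) (a b : Bool) : Idx m → ℂ :=
  (1/2 : ℂ) • (ket2 i + sgn a • ket2 (xo2 i k1) + sgn b • ket2 (xo2 i k2)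
    + (sgn a * sgn b) • ket2 (xo2 (xo2 i k1) k2))

/-- Hermitian inner product `⟨u|v⟩`. -/
noncomputable def dot {m : ℕ} (u v : Idx m → ℂ) : ℂ :=
  ∑ j, starRingEnd ℂ (u j) * v j
/-- Outer product `|v⟩⟨v|`. -/
noncomputable def outer {m : ℕ} (v : Idx m → ℂ) : Matrix (Idx m) (Idx m) ℂ :=
  Matrix.of fun p q => v p * starRingEnd ℂ (v q)

/-- The set of admissible key pairs `(k₁,k₂) = ((k₁₁,k₁₂),(k₂₁,k₂₂))`:
`W_H(k₁₁)`, `W_H(k₂₂)` odd and `W_H(k₁₂)`, `W_H(k₂₁)` even. -/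
def KeyPairs (m : ℕ) : Finset (Idx m × Idx m) :=
  Finset.univ.filter fun q =>
    Odd (wt q.1.1) ∧ Even (wt q.1.2) ∧ Even (wt q.2.1) ∧ Odd (wt q.2.2)

/-- The averaged state `ρ^{ab}_odd`. -/
noncomputable def rhoOdd2 (m : ℕ) (a b : Bool) : Matrix (Idx m) (Idx m) ℂ :=
  ((1 : ℂ) / (2 ^ (4*m - 4) * 2 ^ (2*m))) •
    ∑ q ∈ KeyPairs m, ∑ i : Idx m, outer (Psi q.1 q.2 i a b)

/-! Averaging over `i` and the admissible keys turns `ρ^{00}_odd - ρ^{01}_odd` into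
`c (J - s sᴴ)`, where `c = 4 / 2^{4m}`, `J` is the all-ones matrix and `s_p = (-1)^{W_H(p₂)}` is
the parity sign of the second half of `p`. The parity character sums to zero, so `s` is
orthogonal to the all-ones vector: the difference is `P - Q` with `P, Q ⪰ 0` and `P Q = 0`, hence
`|P - Q| = P + Q` and the trace norm is `c (‖1‖² + ‖s‖²) = 8 / 2^{2m}`. -/

section BitStrings

variable {m n : ℕ}

lemma xo2_eq_add (i k : Idx m) : xo2 i k = i + k := rfl

lemma idx_add_self (a : Idx m) : a + a = 0 :=
  Prod.ext (funext fun _ => BooleanRing.add_self _) (funext fun _ => BooleanRing.add_self _)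

lemma idx_eq_add_iff_add_eq {a b c : Idx m} : a = b + c ↔ a + c = b := by
  constructor <;> rintro rfl <;> rw [add_assoc, idx_add_self, add_zero]

lemma wt_add_add_two_mul_wt_mul (x y : Fin n → Bool) :
    wt (x + y) + 2 * wt (x * y) = wt x + wt y := by
  simp only [wt, Finset.card_filter, Finset.mul_sum, ← Finset.sum_add_distrib]
  refine Finset.sum_congr rfl fun j _ => ?_
  simp only [Pi.add_apply, Pi.mul_apply]
  rcases Bool.eq_false_or_eq_true (x j) with hx | hx <;>
    rcases Bool.eq_false_or_eq_true (y j) with hy | hy <;> simp only [hx, hy] <;> rfl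

lemma even_wt_add_iff (x y : Fin n → Bool) :
    Even (wt (x + y)) ↔ (Even (wt x) ↔ Even (wt y)) := by
  rw [← Nat.even_add, ← wt_add_add_two_mul_wt_mul, Nat.even_add]
  simp

lemma neg_one_pow_wt_add {R : Type*} [Monoid R] [HasDistribNeg R] (x y : Fin n → Bool) :
    (-1 : R) ^ wt (x + y) = (-1) ^ wt x * (-1) ^ wt y := by
  rw [← pow_add, ← wt_add_add_two_mul_wt_mul, pow_add, pow_mul, neg_one_sq, one_pow, mul_one]

lemma sum_neg_one_pow_wt {R : Type*} [CommRing R] (hn : n ≠ 0) :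
    ∑ x : Fin n → Bool, (-1 : R) ^ wt x = 0 := by
  have hprod (x : Fin n → Bool) : (-1 : R) ^ wt x = ∏ j, (-1) ^ (if x j then 1 else 0) := by
    rw [Finset.prod_pow_eq_pow_sum, wt, Finset.card_filter]
  calc ∑ x : Fin n → Bool, (-1 : R) ^ wt x
      = ∏ _j : Fin n, ∑ b : Bool, (-1 : R) ^ (if b then 1 else 0) := by
        rw [Fintype.prod_sum]; exact Fintype.sum_congr _ _ hprod
    _ = 0 := Finset.prod_eq_zero (Finset.mem_univ ⟨0, Nat.pos_of_ne_zero hn⟩) (by simp)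

lemma card_filter_even_wt_eq_card_filter_odd_wt (hn : n ≠ 0) :
    #{x : Fin n → Bool | Even (wt x)} = #{x : Fin n → Bool | Odd (wt x)} := by
  have h := sum_neg_one_pow_wt (R := ℤ) hn
  rw [← Finset.sum_filter_add_sum_filter_not _ fun x => Even (wt x),
    Finset.sum_congr rfl fun x hx => (Finset.mem_filter.mp hx).2.neg_one_pow,
    Finset.sum_congr rfl fun x hx =>
      (Nat.not_even_iff_odd.mp (Finset.mem_filter.mp hx).2).neg_one_pow] at h
  simp only [Nat.not_even_iff_odd, Finset.sum_const, nsmul_eq_mul, mul_one, mul_neg] at h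
  omega

lemma card_filter_even_wt (hn : n ≠ 0) : #{x : Fin n → Bool | Even (wt x)} = 2 ^ (n - 1) := by
  have htotal := card_filter_add_card_filter_not (s := univ) fun x : Fin n → Bool => Even (wt x)
  simp only [Nat.not_even_iff_odd, ← card_filter_even_wt_eq_card_filter_odd_wt hn, card_univ,
    Fintype.card_fun, Fintype.card_bool, Fintype.card_fin] at htotal
  rw [← Nat.two_pow_pred_add_two_pow_pred (Nat.pos_of_ne_zero hn)] at htotal
  omega

lemma card_filter_odd_wt (hn : n ≠ 0) : #{x : Fin n → Bool | Odd (wt x)} = 2 ^ (n - 1) := by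
  rw [← card_filter_even_wt_eq_card_filter_odd_wt hn, card_filter_even_wt hn]

lemma ite_odd_wt_add (x y : Fin n → Bool) :
    (if Odd (wt (x + y)) then 1 else 0 : ℂ) = (1 - (-1) ^ wt x * (-1) ^ wt y) / 2 := by
  rw [← neg_one_pow_wt_add]
  rcases Nat.even_or_odd (wt (x + y)) with h | h
  · simp [h.neg_one_pow, Nat.not_odd_iff_even.mpr h]
  · simp [h.neg_one_pow, h]

end BitStrings

section TraceNorm

variable {ι : Type*} [Fintype ι] [DecidableEq ι]

lemma cfc_sqrt_sq_of_posSemidef {R : Matrix ι ι ℂ} (hR : R.PosSemidef) :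
    cfc Real.sqrt (R ^ 2) = R := by
  have hsa : IsSelfAdjoint R := hR.1
  rw [← cfc_comp_pow Real.sqrt 2 R Real.continuous_sqrt.continuousOn hsa]
  nth_rewrite 2 [← cfc_id' ℝ R]
  refine cfc_congr fun x hx => ?_
  rw [hR.1.spectrum_real_eq_range_eigenvalues] at hx
  obtain ⟨i, rfl⟩ := hx
  exact Real.sqrt_sq (hR.eigenvalues_nonneg i)

lemma traceNorm_eq_re_trace_of_sq_eq {A R : Matrix ι ι ℂ} (hR : R.PosSemidef)
    (h : R ^ 2 = Aᴴ * A) : traceNorm A = R.trace.re := by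
  have hcfc : traceNorm A = (cfc Real.sqrt (Aᴴ * A)).trace.re := by
    rw [(posSemidef_conjTranspose_mul_self A).1.cfc_eq]
    rfl
  rw [hcfc, ← h, cfc_sqrt_sq_of_posSemidef hR]

lemma traceNorm_sub_of_mul_eq_zero {P Q : Matrix ι ι ℂ} (hP : P.PosSemidef) (hQ : Q.PosSemidef)
    (hPQ : P * Q = 0) : traceNorm (P - Q) = (P + Q).trace.re := by
  have hQP : Q * P = 0 := by
    rw [← hP.1.eq, ← hQ.1.eq, ← conjTranspose_mul, hPQ, conjTranspose_zero]
  refine traceNorm_eq_re_trace_of_sq_eq (hP.add hQ) ?_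
  rw [conjTranspose_sub, hP.1.eq, hQ.1.eq, sq, add_mul, mul_add, mul_add, sub_mul, mul_sub,
    mul_sub, hPQ, hQP]
  abel

lemma traceNorm_smul_vecMulVec_sub_vecMulVec {c : ℝ} (hc : 0 ≤ c) {u v : ι → ℂ}
    (huv : star u ⬝ᵥ v = 0) :
    traceNorm ((c : ℂ) • (vecMulVec u (star u) - vecMulVec v (star v)))
      = c * (u ⬝ᵥ star u + v ⬝ᵥ star v).re := by
  have hc' : (0 : ℂ) ≤ c := Complex.zero_le_real.mpr hc
  have hPQ : c • vecMulVec u (star u) * c • vecMulVec v (star v) = 0 := by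
    rw [smul_mul_smul_comm, vecMulVec_mul_vecMulVec, huv, zero_smul, vecMulVec_zero, smul_zero]
  rw [smul_sub, traceNorm_sub_of_mul_eq_zero ((posSemidef_vecMulVec_self_star u).smul hc')
    ((posSemidef_vecMulVec_self_star v).smul hc') hPQ, ← smul_add, trace_smul, trace_add,
    trace_vecMulVec, trace_vecMulVec, smul_eq_mul, Complex.re_ofReal_mul]

end TraceNorm

section States

variable {m : ℕ}

lemma ket2_add_apply (i x p : Idx m) : ket2 (i + x) p = ket2 (p + x) i :=
  if_congr (idx_eq_add_iff_add_eq.trans eq_comm) rfl rfl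

lemma sum_ket2_add_mul_ket2_add (x y p q : Idx m) :
    ∑ i, ket2 (i + x) p * ket2 (i + y) q = if p + q = x + y then 1 else 0 := by
  simp only [ket2_add_apply _ x p]
  simp only [ket2, ite_mul, one_mul, zero_mul, Finset.sum_ite_eq', Finset.mem_univ, if_true]
  exact if_congr (by rw [add_assoc, add_comm p, idx_eq_add_iff_add_eq, add_comm q]) rfl rfl

-- `i` appears as the translate `i + 0`, so that all four kets fit `sum_ket2_add_mul_ket2_add`.
lemma Psi_false_apply (k1 k2 i : Idx m) (b : Bool) (r : Idx m) :
    Psi k1 k2 i false b r = (ket2 (i + 0) r + ket2 (i + k1) r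
      + sgn b * (ket2 (i + k2) r + ket2 (i + (k1 + k2)) r)) / 2 := by
  simp only [Psi, sgn, xo2_eq_add, add_zero, add_assoc, Pi.add_apply, Pi.smul_apply, smul_eq_mul,
    Bool.false_eq_true, if_false]
  ring

lemma sum_outer_Psi_sub_apply (k1 k2 p q : Idx m) :
    (∑ i, (outer (Psi k1 k2 i false false) - outer (Psi k1 k2 i false true))) p q
      = 2 * ((if p + q = k2 then 1 else 0) + if p + q = k1 + k2 then 1 else 0) := by
  have hstar (x r : Idx m) : starRingEnd ℂ (ket2 x r) = ket2 x r := by simp [ket2, apply_ite]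
  have hsummand (i : Idx m) :
      outer (Psi k1 k2 i false false) p q - outer (Psi k1 k2 i false true) p q
        = ((ket2 (i + 0) p + ket2 (i + k1) p) * (ket2 (i + k2) q + ket2 (i + (k1 + k2)) q)
          + (ket2 (i + k2) p + ket2 (i + (k1 + k2)) p) * (ket2 (i + 0) q + ket2 (i + k1) q))
          / 2 := by
    simp only [outer, of_apply, Psi_false_apply, sgn, Bool.false_eq_true, ↓reduceIte, map_div₀,
      map_add, map_mul, map_neg, map_one, map_ofNat, hstar]
    ring
  have hk1 : k1 + (k1 + k2) = k2 := by rw [← add_assoc, idx_add_self, zero_add]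
  have hk2 : k1 + k2 + k1 = k2 := by rw [add_comm, hk1]
  simp only [Matrix.sum_apply, Matrix.sub_apply, hsummand, ← Finset.sum_div, add_mul, mul_add,
    Finset.sum_add_distrib, sum_ket2_add_mul_ket2_add]
  simp only [zero_add, add_zero, hk1, hk2]
  rw [add_comm k2 k1]
  ring

lemma sum_keyPairs_ite (hm : m ≠ 0) (d : Idx m) :
    ∑ k ∈ KeyPairs m, ((if d = k.2 then 1 else 0) + if d = k.1 + k.2 then 1 else 0 : ℂ)
      = 2 ^ (2 * m - 2) * if Odd (wt d.2) then 1 else 0 := by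
  set A : Finset (Idx m) := {k | Odd (wt k.1) ∧ Even (wt k.2)}
  set B : Finset (Idx m) := {k | Even (wt k.1) ∧ Odd (wt k.2)}
  have hKeyPairs : KeyPairs m = A ×ˢ B := by
    ext k
    simp only [KeyPairs, A, B, Finset.mem_filter, Finset.mem_product, Finset.mem_univ, true_and,
      and_assoc]
  have hA : #A = 2 ^ (2 * m - 2) := by
    have hprod : A = ({x | Odd (wt x)} : Finset _) ×ˢ ({x | Even (wt x)} : Finset _) := by
      ext; simp [A]
    rw [hprod, card_product, card_filter_odd_wt hm, card_filter_even_wt hm, ← pow_add]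
    congr 1
    omega
  -- For `k1 ∈ A`, `k2 ↦ k1 + k2` maps `B` onto the strings of parities (odd, odd), and these
  -- together with `B` are exactly the strings whose second half has odd weight.
  have hinner (k1 : Idx m) (hk1 : k1 ∈ A) :
      ∑ k2 ∈ B, ((if d = k2 then 1 else 0) + if d = k1 + k2 then 1 else 0 : ℂ)
        = if Odd (wt d.2) then 1 else 0 := by
    have hshift (k2 : Idx m) : d = k1 + k2 ↔ d + k1 = k2 := by
      rw [add_comm k1, idx_eq_add_iff_add_eq]
    simp only [A, Finset.mem_filter, Finset.mem_univ, true_and] at hk1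
    simp only [Finset.sum_add_distrib, hshift, Finset.sum_ite_eq, B, Finset.mem_filter,
      Finset.mem_univ, true_and, Prod.fst_add, Prod.snd_add, even_wt_add_iff,
      ← Nat.not_even_iff_odd] at hk1 ⊢
    by_cases h1 : Even (wt d.1) <;> by_cases h2 : Even (wt d.2) <;> simp [h1, h2, hk1]
  rw [hKeyPairs, Finset.sum_product, Finset.sum_congr rfl hinner, Finset.sum_const, hA,
    nsmul_eq_mul]
  norm_num

end States

def halfParitySign (m : ℕ) (p : Idx m) : ℂ := (-1) ^ wt p.2

section Difference

variable {m : ℕ}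

lemma star_halfParitySign : star (halfParitySign m) = halfParitySign m := by
  ext p
  simp [halfParitySign]

lemma star_one_dotProduct_halfParitySign (hm : m ≠ 0) : star 1 ⬝ᵥ halfParitySign m = 0 := by
  simp [dotProduct, halfParitySign, Fintype.sum_prod_type, sum_neg_one_pow_wt hm]

lemma one_dotProduct_star_one : (1 : Idx m → ℂ) ⬝ᵥ star 1 = 2 ^ (2 * m) := by
  simp [dotProduct, two_mul, pow_add]

lemma halfParitySign_dotProduct_star :
    halfParitySign m ⬝ᵥ star (halfParitySign m) = 2 ^ (2 * m) := by
  simp [dotProduct, halfParitySign, ← pow_add, two_mul]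

lemma rhoOdd2_sub_eq (hm : m ≠ 0) :
    rhoOdd2 m false false - rhoOdd2 m false true
      = ((4 / 2 ^ (4 * m) : ℝ) : ℂ) •
        (vecMulVec 1 (star 1) - vecMulVec (halfParitySign m) (star (halfParitySign m))) := by
  ext p q
  rw [rhoOdd2, rhoOdd2, ← smul_sub, ← Finset.sum_sub_distrib]
  simp only [← Finset.sum_sub_distrib, Matrix.smul_apply, Matrix.sum_apply p q (KeyPairs m),
    sum_outer_Psi_sub_apply, ← Finset.mul_sum, sum_keyPairs_ite hm, Prod.snd_add, ite_odd_wt_add,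
    Matrix.sub_apply, vecMulVec_apply, star_halfParitySign, halfParitySign, smul_eq_mul,
    Pi.one_apply, star_one, mul_one]
  have hpow : (2 : ℂ) ^ (4 * m - 4) * 2 ^ (2 * m) * 2 ^ 2 = 2 ^ (2 * m - 2) * 2 ^ (4 * m) := by
    rw [← pow_add, ← pow_add, ← pow_add]
    congr 1
    omega
  push_cast
  field_simp
  linear_combination ((-1) ^ wt p.2 * (-1) ^ wt q.2 - 1) * hpow

end Difference

theorem traceDist_rho00_rho01 (m : ℕ) (hm : 1 ≤ m) :
    (1/2 : ℝ) * traceNorm (rhoOdd2 m false false - rhoOdd2 m false true)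
      = 1 / 2 ^ (2*m - 2) := by
  have hm0 : m ≠ 0 := by omega
  rw [rhoOdd2_sub_eq hm0, traceNorm_smul_vecMulVec_sub_vecMulVec (by positivity)
    (star_one_dotProduct_halfParitySign hm0), one_dotProduct_star_one,
    halfParitySign_dotProduct_star]
  simp only [← Complex.ofReal_ofNat, ← Complex.ofReal_pow, ← Complex.ofReal_add,
    Complex.ofReal_re]
  have h4m : (2 : ℝ) ^ (4 * m) = 2 ^ (2 * m - 2) * 2 ^ (2 * m) * 4 := by
    rw [show (4 : ℝ) = 2 ^ 2 by norm_num, ← pow_add, ← pow_add]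
    congr 1
    omega
  rw [h4m]
  field_simp
  ring
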